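/- arXiv:2008.00838 — 4 statements merged into one kernel-verified Lean document; each statement's English description precedes it below -/
import Mathlib

section
/- Let φ : ℝⁿ → ℝ be a smooth strictly convex function that grows faster than any linear function, i.e., for every C > 0 there is R so that φ(x) ≥ C|x| for |x| ≥ R. Then for each fixed t ∈ ℝⁿ, the map x ↦ ∇φ(x) − ∇φ(2t − x) from ℝⁿ to ℝⁿ is surjective. -/
open Filter InnerProductSpace

theorem stmt2 {n : ℕ} (φ : EuclideanSpace ℝ (Fin n) → ℝ)
    (hsmooth : ContDiff ℝ (⊤ : ℕ∞) φ)
    (hconv : StrictConvexOn ℝ Set.univ φ)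
    (hgrowth : ∀ C > (0 : ℝ), ∃ R : ℝ, ∀ x : EuclideanSpace ℝ (Fin n),
      R ≤ ‖x‖ → C * ‖x‖ ≤ φ x)
    (t : EuclideanSpace ℝ (Fin n)) :
    Function.Surjective
      (fun x : EuclideanSpace ℝ (Fin n) =>
        gradient φ x - gradient φ ((2 : ℝ) • t - x)) := by
  intro s
  have hφc : Continuous φ := hsmooth.continuous
  have hφd : Differentiable ℝ φ := hsmooth.differentiable (by simp)
  set f : (EuclideanSpace ℝ (Fin n)) → ℝ := fun x => φ x + φ ((2 : ℝ) • t - x) - inner ℝ s x with hfdef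
  have hfc : Continuous f := by
    apply Continuous.sub
    · exact hφc.add (hφc.comp (continuous_const.sub continuous_id))
    · exact continuous_const.inner continuous_id
  -- lower bound for φ
  obtain ⟨R₁, hR₁⟩ := hgrowth 1 one_pos
  have hKne : (Metric.closedBall (0 : (EuclideanSpace ℝ (Fin n))) (max R₁ 0)).Nonempty :=
    ⟨0, by simp [le_max_right]⟩
  obtain ⟨z, hz, hmz⟩ := (isCompact_closedBall (0 : (EuclideanSpace ℝ (Fin n))) (max R₁ 0)).exists_isMinOn
    hKne hφc.continuousOn
  set m : ℝ := min (φ z) 0 with hmdef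
  have hφlb : ∀ x : EuclideanSpace ℝ (Fin n), m ≤ φ x := by
    intro x
    by_cases hx : ‖x‖ ≤ max R₁ 0
    · exact le_trans (min_le_left _ _) (hmz (by simpa [Metric.mem_closedBall] using hx))
    · push_neg at hx
      have h1 : R₁ ≤ ‖x‖ := le_trans (le_max_left _ _) hx.le
      have := hR₁ x h1
      have h0 : (0:ℝ) ≤ ‖x‖ := norm_nonneg _
      calc m ≤ 0 := min_le_right _ _
        _ ≤ 1 * ‖x‖ := by linarith
        _ ≤ φ x := this
  -- coercivity
  obtain ⟨R, hR⟩ := hgrowth (‖s‖ + 1) (by positivity)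
  have hcoer : Tendsto f (cocompact (EuclideanSpace ℝ (Fin n))) atTop := by
    have hb : ∀ᶠ x : (EuclideanSpace ℝ (Fin n)) in cocompact (EuclideanSpace ℝ (Fin n)), ‖x‖ + m ≤ f x := by
      filter_upwards [tendsto_norm_cocompact_atTop.eventually_ge_atTop R] with x hx
      have h1 : (‖s‖ + 1) * ‖x‖ ≤ φ x := hR x hx
      have h2 : m ≤ φ ((2 : ℝ) • t - x) := hφlb _
      have h3 : (inner ℝ s x : ℝ) ≤ ‖s‖ * ‖x‖ :=
        le_trans (real_inner_le_norm s x) le_rfl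
      simp only [hfdef]
      nlinarith [norm_nonneg x]
    exact tendsto_atTop_mono' _ hb
      (tendsto_atTop_add_const_right _ m tendsto_norm_cocompact_atTop)
  obtain ⟨x₀, hx₀⟩ := hfc.exists_forall_le hcoer
  refine ⟨x₀, ?_⟩
  set y₀ : (EuclideanSpace ℝ (Fin n)) := (2 : ℝ) • t - x₀ with hy₀
  -- derivative of f at x₀
  have h2' : HasFDerivAt (fun x : (EuclideanSpace ℝ (Fin n)) => (2 : ℝ) • t - x)
      (-(ContinuousLinearMap.id ℝ (EuclideanSpace ℝ (Fin n)))) x₀ := (hasFDerivAt_id x₀).const_sub _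
  have h2 : HasFDerivAt (fun x : (EuclideanSpace ℝ (Fin n)) => φ ((2 : ℝ) • t - x))
      ((fderiv ℝ φ y₀).comp (-(ContinuousLinearMap.id ℝ (EuclideanSpace ℝ (Fin n))))) x₀ :=
    (hφd y₀).hasFDerivAt.comp x₀ h2'
  have h3 : HasFDerivAt (fun x : (EuclideanSpace ℝ (Fin n)) => (inner ℝ s x : ℝ)) (innerSL ℝ s) x₀ :=
    (innerSL ℝ s).hasFDerivAt
  have hF : HasFDerivAt f
      (fderiv ℝ φ x₀ + (fderiv ℝ φ y₀).comp (-(ContinuousLinearMap.id ℝ (EuclideanSpace ℝ (Fin n))))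
        - innerSL ℝ s) x₀ :=
    (((hφd x₀).hasFDerivAt.add h2).sub h3)
  have hloc : IsLocalMin f x₀ := Filter.Eventually.of_forall hx₀
  have hzero := hloc.hasFDerivAt_eq_zero hF
  have hzero' : fderiv ℝ φ x₀ - fderiv ℝ φ y₀ - innerSL ℝ s = 0 := by
    rw [← hzero]; ext v; simp [sub_eq_add_neg]
  have hdual : InnerProductSpace.toDual ℝ (EuclideanSpace ℝ (Fin n)) s = innerSL ℝ s := by
    ext v; simp [InnerProductSpace.toDual_apply_apply]
  have hgrad : gradient φ x₀ - gradient φ y₀ - s = 0 := by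
    have := congrArg (InnerProductSpace.toDual ℝ (EuclideanSpace ℝ (Fin n))).symm hzero'
    simpa [gradient, map_sub, ← hdual] using this
  show gradient φ x₀ - gradient φ y₀ = s
  have := sub_eq_zero.mp hgrad
  linear_combination (norm := module) this
end

section
/- Let φ : ℝⁿ → ℝ be smooth, strictly convex, and superlinear. Then the map Λ → ℝⁿ × ℝⁿ defined on Λ = {(x, y, ξ, η) : ξ = ∇φ(x), η = ∇φ(y)} by (x,y,ξ,η) ↦ ((x+y)/2, (ξ−η)/2) is a bijection onto ℝⁿ × ℝⁿ. -/
open Filter InnerProductSpace Set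

private lemma coercive_sub {n : ℕ} (φ : EuclideanSpace ℝ (Fin n) → ℝ)
    (hsuper : Tendsto (fun x : EuclideanSpace ℝ (Fin n) => φ x / ‖x‖) (cocompact _) atTop)
    (c : ℝ) :
    Tendsto (fun x : EuclideanSpace ℝ (Fin n) => φ x - c * ‖x‖) (cocompact _) atTop := by
  rw [tendsto_atTop]
  intro C
  filter_upwards [hsuper.eventually_ge_atTop (|c| + 1),
    tendsto_norm_cocompact_atTop.eventually_ge_atTop (max C 1)] with x h1 h2
  have hx1 : (1 : ℝ) ≤ ‖x‖ := le_trans (le_max_right _ _) h2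
  have hx0 : (0 : ℝ) < ‖x‖ := zero_lt_one.trans_le hx1
  have hφ : (|c| + 1) * ‖x‖ ≤ φ x := (le_div_iff₀ hx0).mp h1
  have hc : c * ‖x‖ ≤ |c| * ‖x‖ := mul_le_mul_of_nonneg_right (le_abs_self c) hx0.le
  have hC : C ≤ ‖x‖ := le_trans (le_max_left _ _) h2
  nlinarith

private lemma key_lemma {n : ℕ} (φ : EuclideanSpace ℝ (Fin n) → ℝ)
    (hsmooth : ContDiff ℝ (⊤ : ℕ∞) φ)
    (hconv : StrictConvexOn ℝ Set.univ φ)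
    (hsuper : Filter.Tendsto (fun x : EuclideanSpace ℝ (Fin n) => φ x / ‖x‖)
      (Filter.cocompact _) Filter.atTop)
    (c w : EuclideanSpace ℝ (Fin n)) :
    ∃! x : EuclideanSpace ℝ (Fin n), gradient φ x - gradient φ (c - x) = w := by
  have hdiff : Differentiable ℝ φ := hsmooth.differentiable (by simp)
  have hcont : Continuous φ := hdiff.continuous
  set ψ : EuclideanSpace ℝ (Fin n) → ℝ := fun x => φ x + φ (c - x) - inner ℝ w x with hψdef
  -- the derivative of ψ
  have hD : ∀ x, HasFDerivAt ψ
      ((toDual ℝ _) (gradient φ x - gradient φ (c - x) - w)) x := by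
    intro x
    have h1 : HasFDerivAt φ ((toDual ℝ _) (gradient φ x)) x :=
      hasGradientAt_iff_hasFDerivAt.mp (hdiff x).hasGradientAt
    have h2a : HasFDerivAt (fun y : EuclideanSpace ℝ (Fin n) => c - y)
        (-(ContinuousLinearMap.id ℝ (EuclideanSpace ℝ (Fin n)))) x := by
      have := (hasFDerivAt_const (𝕜 := ℝ) c x).sub (hasFDerivAt_id x)
      rw [zero_sub] at this
      exact this
    have h2 : HasFDerivAt (fun y => φ (c - y))
        (((toDual ℝ _) (gradient φ (c - x))).comp
          (-(ContinuousLinearMap.id ℝ (EuclideanSpace ℝ (Fin n))))) x :=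
      (hasGradientAt_iff_hasFDerivAt.mp (hdiff (c - x)).hasGradientAt).comp x h2a
    have h3 : HasFDerivAt (fun y : EuclideanSpace ℝ (Fin n) => (inner ℝ w y : ℝ))
        (innerSL ℝ w) x := (innerSL ℝ w).hasFDerivAt
    have hEq : (toDual ℝ (EuclideanSpace ℝ (Fin n)))
          (gradient φ x - gradient φ (c - x) - w)
        = (toDual ℝ _) (gradient φ x)
          + ((toDual ℝ _) (gradient φ (c - x))).comp
              (-(ContinuousLinearMap.id ℝ (EuclideanSpace ℝ (Fin n))))
          - innerSL ℝ w := by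
      ext u
      simp [toDual_apply_apply, innerSL_apply_apply, inner_sub_left, inner_neg_right]
      ring
    rw [hEq]
    exact (h1.add h2).sub h3
  -- convexity
  have hsubconv : ConvexOn ℝ univ fun x : EuclideanSpace ℝ (Fin n) => φ (c - x) := by
    have A := hconv.convexOn.comp_affineMap
      (AffineMap.const ℝ (EuclideanSpace ℝ (Fin n)) c - AffineMap.id ℝ _)
    exact A
  have hlin : ConvexOn ℝ univ fun x : EuclideanSpace ℝ (Fin n) => -(inner ℝ w x : ℝ) := by
    refine ⟨convex_univ, fun x _ y _ a b _ _ hab => le_of_eq ?_⟩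
    simp only [smul_eq_mul, inner_add_right, real_inner_smul_right]
    ring
  have hψstrict : StrictConvexOn ℝ univ ψ := by
    have h := (hconv.add_convexOn hsubconv).add_convexOn hlin
    have : ψ = (fun x => φ x + φ (c - x)) + fun x => -(inner ℝ w x : ℝ) := by
      funext x; simp [hψdef, sub_eq_add_neg]
    rw [this]
    exact h
  have hψconv : ConvexOn ℝ univ ψ := hψstrict.convexOn
  have hψcont : Continuous ψ :=
    (hcont.add (hcont.comp (continuous_const.sub continuous_id))).sub
      (continuous_const.inner continuous_id)
  -- coercivity of ψ
  have hφcoer : Tendsto φ (cocompact _) atTop := by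
    simpa using coercive_sub φ hsuper 0
  obtain ⟨xm, hmin⟩ := hcont.exists_forall_le hφcoer
  have hψcoer : Tendsto ψ (cocompact _) atTop := by
    have hb : ∀ x, φ x - ‖w‖ * ‖x‖ + φ xm ≤ ψ x := by
      intro x
      have h1 := hmin (c - x)
      have h2 : (inner ℝ w x : ℝ) ≤ ‖w‖ * ‖x‖ := real_inner_le_norm w x
      simp only [hψdef]
      linarith
    exact tendsto_atTop_mono hb
      (tendsto_atTop_add_const_right _ _ (coercive_sub φ hsuper ‖w‖))
  obtain ⟨x₀, hx₀⟩ := hψcont.exists_forall_le hψcoer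
  -- a critical point is a global minimum
  have crit_min : ∀ x₁, gradient φ x₁ - gradient φ (c - x₁) = w → ∀ y, ψ x₁ ≤ ψ y := by
    intro x₁ hx₁ y
    have h0 : gradient φ x₁ - gradient φ (c - x₁) - w = 0 := sub_eq_zero.mpr hx₁
    have hzero : HasFDerivAt ψ (0 : EuclideanSpace ℝ (Fin n) →L[ℝ] ℝ) x₁ := by simpa [h0] using hD x₁
    set L : ℝ →ᵃ[ℝ] EuclideanSpace ℝ (Fin n) := AffineMap.lineMap x₁ y with hL
    have hg : ConvexOn ℝ univ (ψ ∘ L) := by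
      have := hψconv.comp_affineMap L
      simpa using this
    have hline : HasDerivAt (fun t : ℝ => L t) (y - x₁) 0 := by
      have hfun : (fun t : ℝ => L t) = fun t : ℝ => t • (y - x₁) + x₁ := by
        funext t
        simp only [hL, AffineMap.lineMap_apply_module]
        module
      rw [hfun]
      simpa using ((hasDerivAt_id (0 : ℝ)).smul_const (y - x₁)).add_const x₁
    have hL0 : L 0 = x₁ := by simp [hL]
    rw [← hL0] at hzero
    have hgd : HasDerivAt (ψ ∘ L) 0 0 := by
      have := hzero.comp_hasDerivAt 0 hline
      simpa using this
    have hslope := hg.le_slope_of_hasDerivAt (mem_univ (0 : ℝ)) (mem_univ (1 : ℝ))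
      zero_lt_one hgd
    have hg0 : (ψ ∘ L) 0 = ψ x₁ := by simp [hL]
    have hg1 : (ψ ∘ L) 1 = ψ y := by simp [hL]
    rw [slope_def_field, hg0, hg1] at hslope
    have h10 : (1 : ℝ) - 0 = 1 := by norm_num
    rw [h10, div_one] at hslope
    linarith
  refine ⟨x₀, ?_, ?_⟩
  · -- x₀ is a critical point
    have hloc : IsLocalMin ψ x₀ := Filter.Eventually.of_forall hx₀
    have h0 := hloc.hasFDerivAt_eq_zero (hD x₀)
    have h0' : gradient φ x₀ - gradient φ (c - x₀) - w = 0 := by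
      have := congrArg (toDual ℝ (EuclideanSpace ℝ (Fin n))).symm h0
      simpa [gradient] using this
    exact sub_eq_zero.mp h0'
  · intro x₁ hx₁
    have hmin₁ : IsMinOn ψ univ x₁ := isMinOn_univ_iff.mpr (crit_min x₁ hx₁)
    have hmin₀ : IsMinOn ψ univ x₀ := isMinOn_univ_iff.mpr hx₀
    exact hψstrict.eq_of_isMinOn hmin₁ hmin₀ (mem_univ _) (mem_univ _)

theorem stmt3 {n : ℕ} (φ : EuclideanSpace ℝ (Fin n) → ℝ)
    (hsmooth : ContDiff ℝ (⊤ : ℕ∞) φ)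
    (hconv : StrictConvexOn ℝ Set.univ φ)
    (hsuper : Filter.Tendsto (fun x : EuclideanSpace ℝ (Fin n) => φ x / ‖x‖)
      (Filter.cocompact _) Filter.atTop) :
    Function.Bijective
      (fun p : {q : EuclideanSpace ℝ (Fin n) × EuclideanSpace ℝ (Fin n) ×
          EuclideanSpace ℝ (Fin n) × EuclideanSpace ℝ (Fin n) //
          q.2.2.1 = gradient φ q.1 ∧ q.2.2.2 = gradient φ q.2.1} =>
        (((1 : ℝ)/2) • (p.val.1 + p.val.2.1),
         ((1 : ℝ)/2) • (p.val.2.2.1 - p.val.2.2.2))) := by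
  have key := fun c w => key_lemma φ hsmooth hconv hsuper c w
  constructor
  · rintro ⟨⟨x₁, y₁, ξ₁, η₁⟩, hξ₁, hη₁⟩ ⟨⟨x₂, y₂, ξ₂, η₂⟩, hξ₂, hη₂⟩ h
    simp only [Prod.mk.injEq] at h hξ₁ hη₁ hξ₂ hη₂
    obtain ⟨h1, h2⟩ := h
    subst hξ₁; subst hη₁; subst hξ₂; subst hη₂
    have h1' : x₁ + y₁ = x₂ + y₂ :=
      smul_right_injective _ (by norm_num : (1/2 : ℝ) ≠ 0) h1
    have h2' : gradient φ x₁ - gradient φ y₁ = gradient φ x₂ - gradient φ y₂ :=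
      smul_right_injective _ (by norm_num : (1/2 : ℝ) ≠ 0) h2
    have e₁ : gradient φ x₁ - gradient φ ((x₁ + y₁) - x₁) = gradient φ x₁ - gradient φ y₁ := by
      rw [add_sub_cancel_left]
    have e₂ : gradient φ x₂ - gradient φ ((x₁ + y₁) - x₂) = gradient φ x₁ - gradient φ y₁ := by
      rw [h1', add_sub_cancel_left]; exact h2'.symm
    obtain ⟨x', -, huniq⟩ := key (x₁ + y₁) (gradient φ x₁ - gradient φ y₁)
    have hx : x₁ = x₂ := (huniq x₁ e₁).trans (huniq x₂ e₂).symm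
    have hy : y₁ = y₂ := by rwa [hx, add_right_inj] at h1'
    subst hx; subst hy
    rfl
  · rintro ⟨z, v⟩
    obtain ⟨x, hx, -⟩ := key ((2 : ℝ) • z) ((2 : ℝ) • v)
    refine ⟨⟨(x, (2 : ℝ) • z - x, gradient φ x, gradient φ ((2 : ℝ) • z - x)),
      rfl, rfl⟩, ?_⟩
    simp only [Prod.mk.injEq]
    constructor
    · module
    · rw [hx]; module
end

section
/- Let φ : ℝⁿ → ℝ ∪ {+∞} be an even convex function and φ* its Legendre transform. If ξ = ∇φ(x) and η = ∇φ(y) (with φ differentiable at x and y), then φ((x+y)/2) + φ*((ξ−η)/2) ≤ (1/2)(⟨x, ξ⟩ + ⟨y, η⟩). -/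
/-!
A differentiable convex function lies above its tangent planes, so for every `z`,
`φ z ≥ φ x + ⟪ξ, z - x⟫` and, by evenness, `φ z = φ (-z) ≥ φ y + ⟪η, -z - y⟫`.
Averaging the two and using `φ ((x + y) / 2) ≤ (φ x + φ y) / 2` bounds every term
`⟪z, (ξ - η) / 2⟫ - φ z` of the supremum defining `φ* ((ξ - η) / 2)` by
`(⟪x, ξ⟫ + ⟪y, η⟫) / 2 - φ ((x + y) / 2)`.
-/

/-- The Legendre transform of a real-valued function, with values in `EReal`. -/
noncomputable def legendre {n : ℕ} (φ : EuclideanSpace ℝ (Fin n) → ℝ)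
    (ξ : EuclideanSpace ℝ (Fin n)) : EReal :=
  ⨆ x, (((inner ℝ x ξ : ℝ) - φ x : ℝ) : EReal)

theorem ConvexOn.add_fderiv_sub_le {E : Type*} [NormedAddCommGroup E] [NormedSpace ℝ E]
    {s : Set E} {f : E → ℝ} {f' : E →L[ℝ] ℝ} {x z : E} (hf : ConvexOn ℝ s f)
    (hx : x ∈ s) (hz : z ∈ s) (hf' : HasFDerivAt f f' x) :
    f x + f' (z - x) ≤ f z := by
  let L : ℝ →ᵃ[ℝ] E := AffineMap.lineMap x z
  have hderiv : HasDerivAt (f ∘ L) (f' (z - x)) 0 := by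
    refine HasFDerivAt.comp_hasDerivAt 0 ?_ AffineMap.hasDerivAt_lineMap
    simpa [L] using hf'
  have hslope := (hf.comp_affineMap L).le_slope_of_hasDerivAt
    (by simpa [L] using hx) (by simpa [L] using hz) zero_lt_one hderiv
  simp only [slope_def_field, Function.comp_apply, L, AffineMap.lineMap_apply_zero,
    AffineMap.lineMap_apply_one, sub_zero, div_one] at hslope
  linarith

theorem ConvexOn.add_inner_gradient_sub_le {E : Type*} [NormedAddCommGroup E]
    [InnerProductSpace ℝ E] [CompleteSpace E] {s : Set E} {f : E → ℝ} {ξ x z : E}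
    (hf : ConvexOn ℝ s f) (hx : x ∈ s) (hz : z ∈ s) (hξ : HasGradientAt f ξ x) :
    f x + inner ℝ ξ (z - x) ≤ f z :=
  hf.add_fderiv_sub_le hx hz (hasGradientAt_iff_hasFDerivAt.mp hξ)

theorem ConvexOn.inner_half_smul_sub_sub_le_of_even {E : Type*} [NormedAddCommGroup E]
    [InnerProductSpace ℝ E] [CompleteSpace E] {φ : E → ℝ} (hconv : ConvexOn ℝ Set.univ φ)
    (heven : ∀ x, φ (-x) = φ x) {x y ξ η : E} (hξ : HasGradientAt φ ξ x)
    (hη : HasGradientAt φ η y) (z : E) :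
    inner ℝ z (((1 : ℝ) / 2) • (ξ - η)) - φ z ≤
      (1 / 2) * (inner ℝ x ξ + inner ℝ y η) - φ ((1 / 2 : ℝ) • (x + y)) := by
  have hmid : φ ((1 / 2 : ℝ) • (x + y)) ≤ (1 / 2) * φ x + (1 / 2) * φ y := by
    simpa [smul_add] using hconv.2 (Set.mem_univ x) (Set.mem_univ y)
      (by norm_num : (0 : ℝ) ≤ 1 / 2) (by norm_num : (0 : ℝ) ≤ 1 / 2) (by norm_num)
  have hx := hconv.add_inner_gradient_sub_le (Set.mem_univ _) (Set.mem_univ z) hξ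
  have hy := hconv.add_inner_gradient_sub_le (Set.mem_univ _) (Set.mem_univ (-z)) hη
  rw [heven] at hy
  simp only [inner_sub_right, inner_neg_right, real_inner_smul_right, real_inner_comm z,
    real_inner_comm x, real_inner_comm y] at hx hy ⊢
  linarith

theorem legendre_le_coe {n : ℕ} {φ : EuclideanSpace ℝ (Fin n) → ℝ}
    {ξ : EuclideanSpace ℝ (Fin n)} {c : ℝ} (h : ∀ z, inner ℝ z ξ - φ z ≤ c) :
    legendre φ ξ ≤ c :=
  iSup_le fun z => EReal.coe_le_coe_iff.mpr (h z)

theorem stmt6 {n : ℕ} (φ : EuclideanSpace ℝ (Fin n) → ℝ)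
    (hconv : ConvexOn ℝ Set.univ φ)
    (heven : ∀ x, φ (-x) = φ x)
    (x y : EuclideanSpace ℝ (Fin n))
    (hx : DifferentiableAt ℝ φ x) (hy : DifferentiableAt ℝ φ y)
    (ξ η : EuclideanSpace ℝ (Fin n))
    (hξ : ξ = gradient φ x) (hη : η = gradient φ y) :
    (φ (((1 : ℝ)/2) • (x + y)) : EReal) + legendre φ (((1 : ℝ)/2) • (ξ - η)) ≤
      (((1 : ℝ)/2) * ((inner ℝ x ξ : ℝ) + (inner ℝ y η : ℝ)) : ℝ) := by
  subst hξ hη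
  have hsup := legendre_le_coe
    (hconv.inner_half_smul_sub_sub_le_of_even heven hx.hasGradientAt hy.hasGradientAt)
  set m := (1 / 2 : ℝ) • (x + y)
  calc _ ≤ (φ m : EReal) + ((_ - φ m : ℝ) : EReal) := add_le_add_right hsup _
    _ = _ := by rw [← EReal.coe_add, add_sub_cancel]
end

section
/- Let φ : ℝⁿ → ℝ be smooth and convex, with Λ parametrized by (x,y) ↦ (x, y, ∇φ(x), ∇φ(y)) and π(x,y,ξ,η) = ((x+y)/2, (ξ−η)/2). Then the pullback via the parametrization of the volume form dt₁∧…∧dtₙ∧ds₁∧…∧dsₙ under π equals 2^{-2n} det(Hess φ(x) + Hess φ(y)) dx ∧ dy. -/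
open Matrix Polynomial ContinuousLinearMap
open scoped RealInnerProductSpace Topology

noncomputable section

namespace Stmt13Aux

lemma det_nonneg_of_psd {n : ℕ} (M : Matrix (Fin n) (Fin n) ℝ)
    (h : ∀ v : Fin n → ℝ, 0 ≤ v ⬝ᵥ M.mulVec v) : 0 ≤ M.det := by
  rcases Nat.eq_zero_or_pos n with hn | hn
  · subst hn; simp [Matrix.det_isEmpty]
  set q : Polynomial ℝ := (-M).charpoly with hq
  have heval : ∀ ε : ℝ, q.eval ε = (ε • (1 : Matrix (Fin n) (Fin n) ℝ) + M).det := by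
    intro ε
    have h2 : (ε • (1 : Matrix (Fin n) (Fin n) ℝ) + M) = ((-M).charmatrix).map (eval ε) := by
      ext i j
      by_cases hij : i = j
      · subst hij; simp [Matrix.charmatrix_apply_eq, Matrix.one_apply, Matrix.smul_apply]
      · simp [Matrix.charmatrix_apply_ne _ _ _ hij, Matrix.one_apply, hij, Matrix.smul_apply]
    calc q.eval ε = (evalRingHom ε) ((-M).charmatrix.det) := rfl
      _ = ((-M).charmatrix.map (evalRingHom ε)).det := RingHom.map_det _ _
      _ = (ε • (1 : Matrix (Fin n) (Fin n) ℝ) + M).det := by rw [h2]; rfl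
  have hne : ∀ ε : ℝ, 0 < ε → q.eval ε ≠ 0 := by
    intro ε hε h0
    rw [heval] at h0
    obtain ⟨v, hv0, hv⟩ := (Matrix.exists_mulVec_eq_zero_iff).2 h0
    have h1 : v ⬝ᵥ (ε • (1 : Matrix (Fin n) (Fin n) ℝ) + M).mulVec v = 0 := by
      rw [hv, dotProduct_zero]
    rw [Matrix.add_mulVec, Matrix.smul_mulVec, Matrix.one_mulVec,
      dotProduct_add, dotProduct_smul] at h1
    have h4 : (0:ℝ) ≤ v ⬝ᵥ v := Finset.sum_nonneg fun i _ => mul_self_nonneg (v i)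
    have h3 : (0:ℝ) < v ⬝ᵥ v :=
      lt_of_le_of_ne h4 (fun hc => hv0 (dotProduct_self_eq_zero.mp hc.symm))
    have h5 := h v
    rw [smul_eq_mul] at h1
    nlinarith
  have hmonic : q.Monic := Matrix.charpoly_monic _
  have hdeg : q.natDegree = n := by
    rw [hq, Matrix.charpoly_natDegree_eq_dim, Fintype.card_fin]
  have htop : Filter.Tendsto (fun x => q.eval x) Filter.atTop Filter.atTop := by
    apply q.tendsto_atTop_of_leadingCoeff_nonneg
    · rw [Polynomial.degree_eq_natDegree hmonic.ne_zero, hdeg]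
      exact_mod_cast hn
    · rw [hmonic.leadingCoeff]; norm_num
  by_contra hneg
  push_neg at hneg
  have h0 : q.eval 0 < 0 := by
    have := heval 0
    simp only [zero_smul, zero_add] at this
    rw [this]; exact hneg
  obtain ⟨b, hb, hb0⟩ := ((htop.eventually_ge_atTop 1).and (Filter.eventually_gt_atTop 0)).exists
  have hcont : ContinuousOn (fun x => q.eval x) (Set.Icc 0 b) := (q.continuous_aeval).continuousOn
  have hmem : (0:ℝ) ∈ Set.Ioo (q.eval 0) (q.eval b) := ⟨h0, lt_of_lt_of_le one_pos hb⟩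
  obtain ⟨x, hx, hqx⟩ := intermediate_value_Ioo (le_of_lt hb0) hcont hmem
  exact hne x hx.1 hqx

variable {n : ℕ}
local notation "E" => EuclideanSpace ℝ (Fin n)

lemma contDiff_gradient (φ : E → ℝ) (hsmooth : ContDiff ℝ (⊤ : ℕ∞) φ) :
    ContDiff ℝ (⊤ : ℕ∞) (gradient φ) := by
  have : gradient φ = fun x => (InnerProductSpace.toDual ℝ _).symm (fderiv ℝ φ x) := rfl
  rw [this]
  exact (InnerProductSpace.toDual ℝ _).symm.contDiff.comp (hsmooth.fderiv_right (by simp))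

lemma quadform_nonneg (φ : E → ℝ) (hsmooth : ContDiff ℝ (⊤ : ℕ∞) φ)
    (hconv : ConvexOn ℝ Set.univ φ) (x v : E) :
    0 ≤ ⟪(fderiv ℝ (gradient φ) x) v, v⟫ := by
  have hg : ContDiff ℝ (⊤ : ℕ∞) (gradient φ) := contDiff_gradient φ hsmooth
  set c : ℝ → E := fun t => x + t • v with hc
  have hcD : ∀ t : ℝ, HasDerivAt c v t := by
    intro t
    have := ((hasDerivAt_id' t).smul_const v).const_add x; rw [one_smul] at this; exact this
  set g : ℝ → ℝ := fun t => φ (c t) with hgdef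
  have hgconv : ConvexOn ℝ Set.univ g := by
    have := hconv.comp_affineMap (AffineMap.lineMap x (x + v) : ℝ →ᵃ[ℝ] E)
    simp only [Set.preimage_univ] at this
    rw [show g = φ ∘ ⇑(AffineMap.lineMap x (x + v) : ℝ →ᵃ[ℝ] E) from ?_]; exact this
    funext t
    show φ (c t) = φ (AffineMap.lineMap x (x + v) t)
    congr 1
    rw [AffineMap.lineMap_apply]
    show x + t • v = t • (x + v - x) + x
    module
  set h : ℝ → ℝ := fun t => ⟪v, gradient φ (c t)⟫ with hh
  have hder : ∀ t, HasDerivAt g (h t) t := by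
    intro t
    have hd : HasGradientAt φ (gradient φ (c t)) (c t) :=
      (hsmooth.differentiable (by simp)).differentiableAt.hasGradientAt
    have h1 := hd.hasFDerivAt.comp_hasDerivAt t (hcD t)
    have h2 : (InnerProductSpace.toDual ℝ _) (gradient φ (c t)) v = h t := by
      rw [InnerProductSpace.toDual_apply_apply]; exact real_inner_comm _ _
    rw [h2] at h1
    exact h1
  have hderiv_eq : deriv g = h := funext fun t => (hder t).deriv
  have hmono : Monotone h := by
    have := hgconv.monotoneOn_deriv (fun t _ => (hder t).differentiableAt)
    rw [hderiv_eq] at this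
    exact monotoneOn_univ.mp this
  set A := fderiv ℝ (gradient φ) x with hA
  have hcomp : HasDerivAt (fun t => gradient φ (c t)) (A v) 0 := by
    have hx0 : c 0 = x := by simp [hc]
    have hfd : HasFDerivAt (gradient φ) A (c 0) := by
      rw [hx0]
      exact ((hg.differentiable (by simp)).differentiableAt).hasFDerivAt
    exact hfd.comp_hasDerivAt 0 (hcD 0)
  have hhD : HasDerivAt h ⟪v, A v⟫ 0 := by
    have h1 := (innerSL ℝ v).hasFDerivAt.comp_hasDerivAt 0 hcomp
    exact h1
  have hslope : Filter.Tendsto (slope h 0) (𝓝[>] 0) (𝓝 ⟪v, A v⟫) :=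
    (hasDerivAt_iff_tendsto_slope.mp hhD).mono_left
      (nhdsWithin_mono 0 (fun t ht => ne_of_gt ht))
  have hge : 0 ≤ ⟪v, A v⟫ := by
    refine ge_of_tendsto hslope ?_
    filter_upwards [self_mem_nhdsWithin] with t ht
    have hmt : h 0 ≤ h t := hmono (le_of_lt ht)
    have ht0 : (0:ℝ) < t := ht
    rw [slope_def_field]
    simp only [sub_zero]
    exact div_nonneg (by linarith) ht0.le
  rwa [real_inner_comm] at hge

lemma toMatrix_blocks {R M : Type*} [CommRing R] [AddCommGroup M] [Module R M]
    {ι : Type*} [Fintype ι] [DecidableEq ι] (b : Module.Basis ι R M) (A B C D : M →ₗ[R] M) :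
    LinearMap.toMatrix (b.prod b) (b.prod b)
      ((A ∘ₗ LinearMap.fst R M M + B ∘ₗ LinearMap.snd R M M).prod
        (C ∘ₗ LinearMap.fst R M M + D ∘ₗ LinearMap.snd R M M)) =
      Matrix.fromBlocks (LinearMap.toMatrix b b A) (LinearMap.toMatrix b b B)
        (LinearMap.toMatrix b b C) (LinearMap.toMatrix b b D) := by
  ext (i | i) (j | j) <;> simp [LinearMap.toMatrix]

lemma det_blocks_half (Ma Mb : Matrix (Fin n) (Fin n) ℝ) :
    det (fromBlocks ((1/2:ℝ)•1) ((1/2:ℝ)•1) ((1/2:ℝ)•Ma) ((1/2:ℝ)•(-Mb)))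
      = (1/2:ℝ)^(2*n) * ((-1)^n * det (Ma+Mb)) := by
  haveI : Invertible (1 : Matrix (Fin n) (Fin n) ℝ) := invertibleOne
  rw [← Matrix.fromBlocks_smul, Matrix.det_smul, Matrix.det_fromBlocks₁₁]
  simp [two_mul]
  ring_nf
  rw [show -Mb - Ma = -(Ma + Mb) by abel, Matrix.det_neg]
  simp [Fintype.card_fin]
  ring

end Stmt13Aux

open Stmt13Aux

/-- Jacobian of the map `(x,y) ↦ ((x+y)/2, (∇φ(x)−∇φ(y))/2)`:
its (absolute) determinant equals `2^{-2n} det(Hess φ(x) + Hess φ(y))`,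
i.e. the pullback of the volume form `dt ∧ ds` is `2^{-2n} det(Hess φ(x)+Hess φ(y)) dx ∧ dy`. -/
theorem stmt13 {n : ℕ} (φ : EuclideanSpace ℝ (Fin n) → ℝ)
    (hsmooth : ContDiff ℝ (⊤ : ℕ∞) φ)
    (hconv : ConvexOn ℝ Set.univ φ)
    (p : EuclideanSpace ℝ (Fin n) × EuclideanSpace ℝ (Fin n)) :
    |LinearMap.det ((fderiv ℝ
        (fun q : EuclideanSpace ℝ (Fin n) × EuclideanSpace ℝ (Fin n) =>
          (((1 : ℝ)/2) • (q.1 + q.2), ((1 : ℝ)/2) • (gradient φ q.1 - gradient φ q.2))) p :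
        (EuclideanSpace ℝ (Fin n) × EuclideanSpace ℝ (Fin n)) →L[ℝ] _) :
        (EuclideanSpace ℝ (Fin n) × EuclideanSpace ℝ (Fin n)) →ₗ[ℝ] _)|
      = ((2 : ℝ) ^ (2 * n))⁻¹ *
        LinearMap.det
          (((fderiv ℝ (gradient φ) p.1 + fderiv ℝ (gradient φ) p.2 :
            EuclideanSpace ℝ (Fin n) →L[ℝ] EuclideanSpace ℝ (Fin n))) :
            EuclideanSpace ℝ (Fin n) →ₗ[ℝ] EuclideanSpace ℝ (Fin n)) := by
  classical
  have hg : ContDiff ℝ (⊤ : ℕ∞) (gradient φ) := contDiff_gradient φ hsmooth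
  have hgd := hg.differentiable (by simp)
  set A : (EuclideanSpace ℝ (Fin n)) →L[ℝ] (EuclideanSpace ℝ (Fin n)) := fderiv ℝ (gradient φ) p.1 with hAdef
  set B : (EuclideanSpace ℝ (Fin n)) →L[ℝ] (EuclideanSpace ℝ (Fin n)) := fderiv ℝ (gradient φ) p.2 with hBdef
  set L : (EuclideanSpace ℝ (Fin n)) × (EuclideanSpace ℝ (Fin n)) →L[ℝ] (EuclideanSpace ℝ (Fin n)) × (EuclideanSpace ℝ (Fin n)) :=
    ((((1:ℝ)/2) • (fst ℝ (EuclideanSpace ℝ (Fin n)) (EuclideanSpace ℝ (Fin n)) + snd ℝ (EuclideanSpace ℝ (Fin n)) (EuclideanSpace ℝ (Fin n)))).prod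
       (((1:ℝ)/2) • (A.comp (fst ℝ (EuclideanSpace ℝ (Fin n)) (EuclideanSpace ℝ (Fin n))) - B.comp (snd ℝ (EuclideanSpace ℝ (Fin n)) (EuclideanSpace ℝ (Fin n)))))) with hLdef
  have hL : fderiv ℝ (fun q : (EuclideanSpace ℝ (Fin n)) × (EuclideanSpace ℝ (Fin n)) =>
        (((1 : ℝ)/2) • (q.1 + q.2), ((1 : ℝ)/2) • (gradient φ q.1 - gradient φ q.2))) p = L := by
    have h1 : HasFDerivAt (fun q : (EuclideanSpace ℝ (Fin n)) × (EuclideanSpace ℝ (Fin n)) => q.1 + q.2) (fst ℝ (EuclideanSpace ℝ (Fin n)) (EuclideanSpace ℝ (Fin n)) + snd ℝ (EuclideanSpace ℝ (Fin n)) (EuclideanSpace ℝ (Fin n))) p :=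
      (hasFDerivAt_fst.add hasFDerivAt_snd)
    have h2 : HasFDerivAt (fun q : (EuclideanSpace ℝ (Fin n)) × (EuclideanSpace ℝ (Fin n)) => gradient φ q.1) (A.comp (fst ℝ (EuclideanSpace ℝ (Fin n)) (EuclideanSpace ℝ (Fin n)))) p :=
      (hgd.differentiableAt.hasFDerivAt).comp p hasFDerivAt_fst
    have h3 : HasFDerivAt (fun q : (EuclideanSpace ℝ (Fin n)) × (EuclideanSpace ℝ (Fin n)) => gradient φ q.2) (B.comp (snd ℝ (EuclideanSpace ℝ (Fin n)) (EuclideanSpace ℝ (Fin n)))) p :=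
      (hgd.differentiableAt.hasFDerivAt).comp p hasFDerivAt_snd
    exact HasFDerivAt.fderiv (HasFDerivAt.prodMk (h1.const_smul ((1:ℝ)/2)) ((h2.sub h3).const_smul ((1:ℝ)/2)))
  rw [hL]
  -- block linear map form
  have hcoe : ((L : (EuclideanSpace ℝ (Fin n)) × (EuclideanSpace ℝ (Fin n)) →L[ℝ] (EuclideanSpace ℝ (Fin n)) × (EuclideanSpace ℝ (Fin n))) : (EuclideanSpace ℝ (Fin n)) × (EuclideanSpace ℝ (Fin n)) →ₗ[ℝ] (EuclideanSpace ℝ (Fin n)) × (EuclideanSpace ℝ (Fin n))) =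
      (((((1:ℝ)/2) • LinearMap.id) ∘ₗ LinearMap.fst ℝ (EuclideanSpace ℝ (Fin n)) (EuclideanSpace ℝ (Fin n))
          + ((((1:ℝ)/2)) • LinearMap.id) ∘ₗ LinearMap.snd ℝ (EuclideanSpace ℝ (Fin n)) (EuclideanSpace ℝ (Fin n))).prod
       ((((1:ℝ)/2) • (A : (EuclideanSpace ℝ (Fin n)) →ₗ[ℝ] (EuclideanSpace ℝ (Fin n)))) ∘ₗ LinearMap.fst ℝ (EuclideanSpace ℝ (Fin n)) (EuclideanSpace ℝ (Fin n))
          + ((-((1:ℝ)/2)) • (B : (EuclideanSpace ℝ (Fin n)) →ₗ[ℝ] (EuclideanSpace ℝ (Fin n)))) ∘ₗ LinearMap.snd ℝ (EuclideanSpace ℝ (Fin n)) (EuclideanSpace ℝ (Fin n)))) := by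
    apply LinearMap.ext
    rintro ⟨u, v⟩
    apply Prod.ext <;> simp [hLdef, smul_add, smul_sub] <;> module
  set b : Module.Basis (Fin n) ℝ (EuclideanSpace ℝ (Fin n)) := (EuclideanSpace.basisFun (Fin n) ℝ).toBasis with hb
  set Ma := LinearMap.toMatrix b b (A : (EuclideanSpace ℝ (Fin n)) →ₗ[ℝ] (EuclideanSpace ℝ (Fin n))) with hMa
  set Mb := LinearMap.toMatrix b b (B : (EuclideanSpace ℝ (Fin n)) →ₗ[ℝ] (EuclideanSpace ℝ (Fin n))) with hMb
  have hdetL : LinearMap.det ((L : (EuclideanSpace ℝ (Fin n)) × (EuclideanSpace ℝ (Fin n)) →L[ℝ] (EuclideanSpace ℝ (Fin n)) × (EuclideanSpace ℝ (Fin n))) : (EuclideanSpace ℝ (Fin n)) × (EuclideanSpace ℝ (Fin n)) →ₗ[ℝ] (EuclideanSpace ℝ (Fin n)) × (EuclideanSpace ℝ (Fin n)))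
      = (1/2:ℝ)^(2*n) * ((-1)^n * det (Ma + Mb)) := by
    rw [← LinearMap.det_toMatrix (b.prod b), hcoe, toMatrix_blocks]
    rw [show ((-((1:ℝ)/2)) • (B : (EuclideanSpace ℝ (Fin n)) →ₗ[ℝ] (EuclideanSpace ℝ (Fin n)))) = ((1:ℝ)/2) • (-(B : (EuclideanSpace ℝ (Fin n)) →ₗ[ℝ] (EuclideanSpace ℝ (Fin n)))) by
      rw [neg_smul, smul_neg]]
    simp only [_root_.map_smul, _root_.map_neg, LinearMap.toMatrix_id]
    exact det_blocks_half Ma Mb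
  -- determinant of the sum and positivity
  have hsum : det (Ma + Mb) = LinearMap.det
      (((A + B : (EuclideanSpace ℝ (Fin n)) →L[ℝ] (EuclideanSpace ℝ (Fin n)))) : (EuclideanSpace ℝ (Fin n)) →ₗ[ℝ] (EuclideanSpace ℝ (Fin n))) := by
    rw [← LinearMap.det_toMatrix b, ContinuousLinearMap.coe_add, map_add]
  have hpsd : 0 ≤ det (Ma + Mb) := by
    apply det_nonneg_of_psd
    intro v
    set w : (EuclideanSpace ℝ (Fin n)) := (EuclideanSpace.equiv (Fin n) ℝ).symm v with hw
    have hrepr : ⇑(b.repr w) = v := by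
      funext i
      rw [hb, (EuclideanSpace.basisFun (Fin n) ℝ).coe_toBasis_repr_apply,
        EuclideanSpace.basisFun_repr]
      rfl
    have hmv : (Ma + Mb).mulVec v = ⇑(b.repr (((A : (EuclideanSpace ℝ (Fin n)) →ₗ[ℝ] (EuclideanSpace ℝ (Fin n))) + (B : (EuclideanSpace ℝ (Fin n)) →ₗ[ℝ] (EuclideanSpace ℝ (Fin n)))) w)) := by
      rw [hMa, hMb, ← map_add, ← hrepr]
      exact LinearMap.toMatrix_mulVec_repr b b _ w
    have key : ∀ i, (b.repr (((A : (EuclideanSpace ℝ (Fin n)) →ₗ[ℝ] (EuclideanSpace ℝ (Fin n)))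
        + (B : (EuclideanSpace ℝ (Fin n)) →ₗ[ℝ] (EuclideanSpace ℝ (Fin n)))) w)) i
        = ((A : (EuclideanSpace ℝ (Fin n)) →ₗ[ℝ] (EuclideanSpace ℝ (Fin n))) w
          + (B : (EuclideanSpace ℝ (Fin n)) →ₗ[ℝ] (EuclideanSpace ℝ (Fin n))) w) i := by
      intro i
      rw [hb, (EuclideanSpace.basisFun (Fin n) ℝ).coe_toBasis_repr_apply,
        EuclideanSpace.basisFun_repr]
      rfl
    have this2 : v ⬝ᵥ (Ma + Mb).mulVec v
        = ⟪(A : (EuclideanSpace ℝ (Fin n)) →ₗ[ℝ] (EuclideanSpace ℝ (Fin n))) w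
          + (B : (EuclideanSpace ℝ (Fin n)) →ₗ[ℝ] (EuclideanSpace ℝ (Fin n))) w, w⟫ := by
      rw [hmv, dotProduct, PiLp.inner_apply]
      apply Finset.sum_congr rfl
      intro i _
      rw [key i]
      have hv : v i = w i := rfl
      simp [RCLike.inner_apply, hv, mul_comm]
    rw [this2, inner_add_left]
    have h1 := quadform_nonneg φ hsmooth hconv p.1 w
    have h2 := quadform_nonneg φ hsmooth hconv p.2 w
    have e1 : ⟪(A : (EuclideanSpace ℝ (Fin n)) →ₗ[ℝ] (EuclideanSpace ℝ (Fin n))) w, w⟫ = ⟪A w, w⟫ := rfl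
    have e2 : ⟪(B : (EuclideanSpace ℝ (Fin n)) →ₗ[ℝ] (EuclideanSpace ℝ (Fin n))) w, w⟫ = ⟪B w, w⟫ := rfl
    rw [← hAdef] at h1
    rw [← hBdef] at h2
    rw [e1, e2]
    linarith
  rw [hdetL, ← hsum] at *
  rw [abs_mul, abs_mul]
  rw [abs_of_nonneg (by positivity : (0:ℝ) ≤ (1/2:ℝ)^(2*n)), abs_pow, abs_neg, abs_one, one_pow,
    one_mul, abs_of_nonneg hpsd, hsum]
  rw [one_div, inv_pow]
end
end
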